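/- Under the PIGD setup, assume additionally that F is coercive (F(x) → +∞ as ‖x‖ → +∞), argmin F is nonempty, and 0 < inf_k β_k ≤ β_k ≤ β_0 < 1 for all k. Then F(x^k) − min F = O(1/k), i.e., there exists C > 0 such that F(x^k) − min F ≤ C/k for all k ≥ 1. -/

import Mathlib

/-!
The energy `V k = F (x k) - min F + β k / (2 γ k) * ‖x k - x (k - 1)‖ ^ 2` drops by at least
`ε * ‖x (k + 1) - x k‖ ^ 2` at every step (descent lemma and prox inequality, with
`ε = L (1 - c) / (2 c)` coming from the stepsize), so the squared steps are summable and, by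
coercivity, the iterates stay bounded. The same inequalities tested against a minimizer bound
`γ k * (F (x (k + 1)) - min F)` by a telescoping term in `‖x k - x*‖ ^ 2`, an inertial term that
Abel summation controls through the monotonicity of `β` and the boundedness of the iterates, and
squared steps. Hence `∑ V k` is bounded, and as `V` is antitone, `k * V k ≤ V 1 + ⋯ + V k`.
-/

open Set Filter Topology AffineMap
open scoped RealInnerProductSpace

theorem le_of_forall_mem_Ioc_le_add_mul {a b C : ℝ} (h : ∀ t ∈ Ioc (0 : ℝ) 1, a ≤ b + t * C) :
    a ≤ b := by
  have hlim : Tendsto (fun t : ℝ => b + t * C) (𝓝[>] 0) (𝓝 b) := by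
    simpa using (tendsto_const_nhds.add (tendsto_id.mul_const C)).mono_left
      (nhdsWithin_le_nhds (a := (0 : ℝ)))
  exact ge_of_tendsto hlim (eventually_of_mem (Ioc_mem_nhdsGT zero_lt_one) h)

theorem sum_range_mul_sub_le_of_antitone {β A : ℕ → ℝ} {M : ℝ} (hβ : Antitone β)
    (hβ0 : ∀ k, 0 ≤ β k) (hA0 : ∀ k, 0 ≤ A k) (hAM : ∀ k, A k ≤ M) (N : ℕ) :
    ∑ k ∈ Finset.range N, β k * (A (k + 1) - A k) ≤ β 0 * M := by
  have hsum_by_parts : ∀ N, ∑ k ∈ Finset.range N, β k * (A (k + 1) - A k)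
      ≤ β N * A N - β 0 * A 0 + (β 0 - β N) * M := by
    intro N
    induction N with
    | zero => simp
    | succ m ih =>
      rw [Finset.sum_range_succ]
      nlinarith [mul_nonneg (sub_nonneg.2 (hβ m.le_succ)) (sub_nonneg.2 (hAM (m + 1)))]
  nlinarith [hsum_by_parts N, mul_le_mul_of_nonneg_left (hAM N) (hβ0 N), mul_nonneg (hβ0 0) (hA0 0)]

theorem mul_sum_range_le_of_descent {V d : ℕ → ℝ} {ε : ℝ} (hV : ∀ k, 0 ≤ V k)
    (h : ∀ k, V (k + 1) + ε * d (k + 1) ≤ V k) (N : ℕ) :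
    ε * ∑ k ∈ Finset.range N, d (k + 1) ≤ V 0 := by
  have hsum : ∑ k ∈ Finset.range N, ε * d (k + 1) ≤ ∑ k ∈ Finset.range N, (V k - V (k + 1)) :=
    Finset.sum_le_sum fun k _ => by linarith [h k]
  rw [Finset.sum_range_sub'] at hsum
  rw [Finset.mul_sum]
  linarith [hV N]

section Lyapunov

variable {r d δ : ℕ → ℝ} {ε : ℝ}

def lyapunov (r δ d : ℕ → ℝ) (k : ℕ) : ℝ := r k + δ k * d k

theorem le_lyapunov (hδ0 : ∀ k, 0 ≤ δ k) (hd : ∀ k, 0 ≤ d k) (k : ℕ) :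
    r k ≤ lyapunov r δ d k :=
  le_add_of_nonneg_right (mul_nonneg (hδ0 k) (hd k))

theorem lyapunov_succ_add_le (hδ : Antitone δ) (hd : ∀ k, 0 ≤ d k)
    (hdecr : ∀ k, r (k + 1) + (δ k + ε) * d (k + 1) ≤ r k + δ k * d k) (k : ℕ) :
    lyapunov r δ d (k + 1) + ε * d (k + 1) ≤ lyapunov r δ d k := by
  unfold lyapunov
  nlinarith [hdecr k, mul_le_mul_of_nonneg_right (hδ k.le_succ) (hd (k + 1))]

theorem lyapunov_antitone (hδ : Antitone δ) (hd : ∀ k, 0 ≤ d k) (hε : 0 ≤ ε)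
    (hdecr : ∀ k, r (k + 1) + (δ k + ε) * d (k + 1) ≤ r k + δ k * d k) :
    Antitone (lyapunov r δ d) :=
  antitone_nat_of_succ_le fun k => by
    nlinarith [lyapunov_succ_add_le hδ hd hdecr k, mul_nonneg hε (hd (k + 1))]

theorem mul_sum_range_le_of_gap {A β : ℕ → ℝ} {γ M : ℝ} (hβ : Antitone β) (hβ0 : ∀ k, 0 ≤ β k)
    (hA0 : ∀ k, 0 ≤ A k) (hAM : ∀ k, A k ≤ M) (hd : ∀ k, 0 ≤ d k)
    (hgap : ∀ k, γ * r (k + 1) ≤ (A (k + 1) - A (k + 2)) / 2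
      + β k / 2 * (A (k + 1) - A k) + d k + d (k + 1)) (N : ℕ) :
    γ * ∑ k ∈ Finset.range N, r (k + 1)
      ≤ A 1 / 2 + β 0 * M / 2 + d 0 + 2 * ∑ k ∈ Finset.range N, d (k + 1) := by
  have hsum := Finset.sum_le_sum fun k (_ : k ∈ Finset.range N) => hgap k
  simp only [Finset.sum_add_distrib, ← Finset.mul_sum, ← Finset.sum_div] at hsum
  have hA : ∑ k ∈ Finset.range N, (A (k + 1) - A (k + 2)) = A 1 - A (N + 1) :=
    Finset.sum_range_sub' (fun k => A (k + 1)) N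
  have hβA : ∑ k ∈ Finset.range N, β k / 2 * (A (k + 1) - A k) ≤ β 0 * M / 2 := by
    have := sum_range_mul_sub_le_of_antitone hβ hβ0 hA0 hAM N
    simp only [div_mul_eq_mul_div, ← Finset.sum_div]
    linarith
  have hd_shift : ∑ k ∈ Finset.range N, d k + d N = ∑ k ∈ Finset.range N, d (k + 1) + d 0 := by
    rw [← Finset.sum_range_succ, Finset.sum_range_succ']
  linarith [hA0 (N + 1), hd N]

theorem exists_mul_le_of_lyapunov {A β : ℕ → ℝ} {γ M : ℝ} (hγ : 0 < γ) (hε : 0 < ε)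
    (hr : ∀ k, 0 ≤ r k) (hd : ∀ k, 0 ≤ d k) (hδ : Antitone δ) (hδ0 : ∀ k, 0 ≤ δ k)
    (hβ : Antitone β) (hβ0 : ∀ k, 0 ≤ β k) (hA0 : ∀ k, 0 ≤ A k) (hAM : ∀ k, A k ≤ M)
    (hdecr : ∀ k, r (k + 1) + (δ k + ε) * d (k + 1) ≤ r k + δ k * d k)
    (hgap : ∀ k, γ * r (k + 1) ≤ (A (k + 1) - A (k + 2)) / 2
      + β k / 2 * (A (k + 1) - A k) + d k + d (k + 1)) :
    ∃ C, ∀ N : ℕ, N * r N ≤ C := by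
  set V := lyapunov r δ d
  have hV0 : ∀ k, 0 ≤ V k := fun k => (hr k).trans (le_lyapunov hδ0 hd k)
  have hd_sum : ∀ N, ∑ k ∈ Finset.range N, d (k + 1) ≤ V 0 / ε := fun N => by
    rw [le_div_iff₀' hε]
    exact mul_sum_range_le_of_descent hV0 (lyapunov_succ_add_le hδ hd hdecr) N
  have hr_sum : ∀ N, ∑ k ∈ Finset.range N, r (k + 1)
      ≤ (A 1 / 2 + β 0 * M / 2 + d 0 + 2 * (V 0 / ε)) / γ := fun N => by
    rw [le_div_iff₀' hγ]
    linarith [mul_sum_range_le_of_gap hβ hβ0 hA0 hAM hd hgap N, hd_sum N]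
  have hδd_sum : ∀ N, ∑ k ∈ Finset.range N, δ (k + 1) * d (k + 1) ≤ δ 0 * (V 0 / ε) := fun N =>
    calc ∑ k ∈ Finset.range N, δ (k + 1) * d (k + 1)
        ≤ ∑ k ∈ Finset.range N, δ 0 * d (k + 1) :=
          Finset.sum_le_sum fun k _ => mul_le_mul_of_nonneg_right (hδ (Nat.zero_le _)) (hd _)
      _ ≤ δ 0 * (V 0 / ε) := by
          rw [← Finset.mul_sum]
          exact mul_le_mul_of_nonneg_left (hd_sum N) (hδ0 0)
  refine ⟨(A 1 / 2 + β 0 * M / 2 + d 0 + 2 * (V 0 / ε)) / γ + δ 0 * (V 0 / ε), fun N => ?_⟩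
  have hVanti := lyapunov_antitone hδ hd hε.le hdecr
  calc (N : ℝ) * r N ≤ N * V N := mul_le_mul_of_nonneg_left (le_lyapunov hδ0 hd N) N.cast_nonneg
    _ ≤ ∑ k ∈ Finset.range N, V (k + 1) := by
        simpa using Finset.card_nsmul_le_sum (Finset.range N) (fun k => V (k + 1)) (V N)
          fun k hk => hVanti (Finset.mem_range.1 hk)
    _ = ∑ k ∈ Finset.range N, r (k + 1) + ∑ k ∈ Finset.range N, δ (k + 1) * d (k + 1) :=
        Finset.sum_add_distrib
    _ ≤ _ := add_le_add (hr_sum N) (hδd_sum N)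

theorem exists_norm_le_of_tendsto_comap_norm {α : Type*} [Norm α] {F : α → ℝ}
    (hF : Tendsto F (comap norm atTop) atTop) (C : ℝ) : ∃ R, ∀ z, F z ≤ C → ‖z‖ ≤ R := by
  obtain ⟨R, hR⟩ := eventually_atTop.1 (eventually_comap.1 (hF.eventually (eventually_gt_atTop C)))
  exact ⟨R, fun z hz => (lt_of_not_ge fun h => (hR ‖z‖ h z rfl).not_ge hz).le⟩

variable {E : Type*} [NormedAddCommGroup E] [InnerProductSpace ℝ E]

theorem two_mul_inner_le_norm_sq_add_norm_sq (x y : E) : 2 * ⟪x, y⟫ ≤ ‖x‖ ^ 2 + ‖y‖ ^ 2 := by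
  linarith [norm_sub_sq_real x y, sq_nonneg ‖x - y‖]

theorem IsMinOn.mul_sub_le_inner_of_prox {g : E → ℝ} {γ : ℝ} {y p : E} (hg : ConvexOn ℝ univ g)
    (hγ : 0 < γ) (hp : IsMinOn (fun z => ‖z - y‖ ^ 2 / (2 * γ) + g z) univ p) (u : E) :
    γ * (g p - g u) ≤ ⟪p - y, u - p⟫ := by
  refine le_of_forall_mem_Ioc_le_add_mul (C := ‖u - p‖ ^ 2 / 2) fun t ht => ?_
  have hmin : ‖p - y‖ ^ 2 / (2 * γ) + g p ≤ ‖lineMap p u t - y‖ ^ 2 / (2 * γ) + g (lineMap p u t) :=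
    hp (mem_univ _)
  have hconv : g (lineMap p u t) ≤ (1 - t) * g p + t * g u := by
    simpa [lineMap_apply_module] using
      hg.2 (mem_univ p) (mem_univ u) (sub_nonneg.2 ht.2) ht.1.le (by ring)
  have hexp : ‖lineMap p u t - y‖ ^ 2
      = ‖p - y‖ ^ 2 + 2 * t * ⟪p - y, u - p⟫ + t ^ 2 * ‖u - p‖ ^ 2 := by
    rw [lineMap_apply_module', show t • (u - p) + p - y = (p - y) + t • (u - p) by abel,
      norm_add_sq_real, inner_smul_right, norm_smul, mul_pow, Real.norm_eq_abs, sq_abs]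
    ring
  rw [hexp, add_div, add_div] at hmin
  have : t * (γ * (g p - g u)) ≤ t * (⟪p - y, u - p⟫ + t * (‖u - p‖ ^ 2 / 2)) := by
    field_simp at hmin
    nlinarith
  exact le_of_mul_le_mul_left this ht.1

variable [CompleteSpace E]

theorem HasGradientAt.hasDerivAt_comp_lineMap {f : E → ℝ} {f' x y : E} {t : ℝ}
    (h : HasGradientAt f f' (lineMap x y t)) :
    HasDerivAt (f ∘ lineMap x y) ⟪f', y - x⟫ t :=
  h.hasFDerivAt.comp_hasDerivAt t hasDerivAt_lineMap

theorem ConvexOn.add_inner_le_of_hasGradientAt {f : E → ℝ} {f' x : E} (hf : ConvexOn ℝ univ f)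
    (h : HasGradientAt f f' x) (y : E) : f x + ⟪f', y - x⟫ ≤ f y := by
  have h0 : HasGradientAt f f' (lineMap x y (0 : ℝ)) := by rwa [lineMap_apply_zero]
  have := (hf.comp_affineMap (lineMap x y)).le_slope_of_hasDerivAt (mem_univ 0) (mem_univ 1)
    zero_lt_one h0.hasDerivAt_comp_lineMap
  simp only [slope_def_field, Function.comp_apply, lineMap_apply_zero, lineMap_apply_one] at this
  linarith

theorem le_add_inner_add_sq_of_lipschitz_gradient {f : E → ℝ} {f' : E → E} {L : ℝ}
    (hf' : ∀ z, HasGradientAt f (f' z) z) (hlip : ∀ a b, ‖f' a - f' b‖ ≤ L * ‖a - b‖) (x y : E) :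
    f y ≤ f x + ⟪f' x, y - x⟫ + L / 2 * ‖y - x‖ ^ 2 := by
  set φ : ℝ → ℝ := fun t => f (lineMap x y t) - t * ⟪f' x, y - x⟫ - L / 2 * t ^ 2 * ‖y - x‖ ^ 2
  have hφ : ∀ t, HasDerivAt φ (⟪f' (lineMap x y t) - f' x, y - x⟫ - L * t * ‖y - x‖ ^ 2) t := by
    intro t
    have hf_line : HasDerivAt (f ∘ lineMap x y) ⟪f' (lineMap x y t), y - x⟫ t :=
      (hf' _).hasDerivAt_comp_lineMap
    refine ((hf_line.sub ((hasDerivAt_id t).mul_const ⟪f' x, y - x⟫)).sub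
      (((hasDerivAt_pow 2 t).const_mul (L / 2)).mul_const (‖y - x‖ ^ 2))).congr_deriv ?_
    simp only [inner_sub_left]
    ring
  have hφ_nonpos : ∀ t ∈ interior (Ici (0 : ℝ)),
      ⟪f' (lineMap x y t) - f' x, y - x⟫ - L * t * ‖y - x‖ ^ 2 ≤ 0 := by
    intro t ht
    rw [interior_Ici, mem_Ioi] at ht
    have hdist : ‖lineMap x y t - x‖ = t * ‖y - x‖ := by
      rw [← vsub_eq_sub, lineMap_vsub_left, norm_smul, Real.norm_of_nonneg ht.le, vsub_eq_sub]
    have := (real_inner_le_norm _ _).trans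
      (mul_le_mul_of_nonneg_right (hlip (lineMap x y t) x) (norm_nonneg (y - x)))
    rw [hdist] at this
    linarith
  have hanti : AntitoneOn φ (Ici 0) :=
    antitoneOn_of_hasDerivWithinAt_nonpos (convex_Ici 0)
      (HasDerivAt.continuousOn fun t _ => hφ t) (fun t _ => (hφ t).hasDerivWithinAt) hφ_nonpos
  have := hanti (mem_Ici.2 le_rfl) (mem_Ici.2 zero_le_one) zero_le_one
  simp only [φ, lineMap_apply_zero, lineMap_apply_one] at this
  linarith

section InertialProxGrad

variable {f g : E → ℝ} {f' : E → E} {L γ β : ℝ} {a q p : E}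

theorem inertial_prox_grad_mul_sub_le (hfc : ConvexOn ℝ univ f) (hgc : ConvexOn ℝ univ g)
    (hf' : ∀ z, HasGradientAt f (f' z) z) (hlip : ∀ a b, ‖f' a - f' b‖ ≤ L * ‖a - b‖)
    (hγ : 0 < γ)
    (hp : IsMinOn (fun z => ‖z - (a - γ • f' a + β • (a - q))‖ ^ 2 / (2 * γ) + g z) univ p)
    (u : E) :
    γ * ((f + g) p - (f + g) u)
      ≤ ⟪p - a, u - p⟫ + β * ⟪a - q, p - u⟫ + γ * L / 2 * ‖p - a‖ ^ 2 := by
  have hprox := hp.mul_sub_le_inner_of_prox hgc hγ u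
  have hdesc := le_add_inner_add_sq_of_lipschitz_gradient hf' hlip a p
  have hconv := hfc.add_inner_le_of_hasGradientAt (hf' a) u
  have hf : f p - f u ≤ L / 2 * ‖p - a‖ ^ 2 - ⟪f' a, u - p⟫ := by
    have : ⟪f' a, u - p⟫ = ⟪f' a, u - a⟫ - ⟪f' a, p - a⟫ := by
      rw [← inner_sub_right, sub_sub_sub_cancel_right]
    linarith
  have hsplit : ⟪p - (a - γ • f' a + β • (a - q)), u - p⟫
      = ⟪p - a, u - p⟫ + γ * ⟪f' a, u - p⟫ + β * ⟪a - q, p - u⟫ := by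
    rw [show p - (a - γ • f' a + β • (a - q)) = (p - a) + γ • f' a - β • (a - q) by abel,
      inner_sub_left, inner_add_left, inner_smul_left, inner_smul_left,
      ← neg_sub u p, inner_neg_right]
    simp only [RCLike.conj_to_real]
    ring
  simp only [Pi.add_apply]
  nlinarith [mul_le_mul_of_nonneg_left hf hγ.le]

theorem inertial_prox_grad_sufficient_decrease (hfc : ConvexOn ℝ univ f)
    (hgc : ConvexOn ℝ univ g) (hf' : ∀ z, HasGradientAt f (f' z) z)
    (hlip : ∀ a b, ‖f' a - f' b‖ ≤ L * ‖a - b‖) (hγ : 0 < γ) (hβ : 0 ≤ β)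
    (hp : IsMinOn (fun z => ‖z - (a - γ • f' a + β • (a - q))‖ ^ 2 / (2 * γ) + g z) univ p) :
    (f + g) p + ((2 - β) / (2 * γ) - L / 2) * ‖p - a‖ ^ 2
      ≤ (f + g) a + β / (2 * γ) * ‖a - q‖ ^ 2 := by
  have hkey := inertial_prox_grad_mul_sub_le hfc hgc hf' hlip hγ hp a
  rw [← neg_sub p a, inner_neg_right, real_inner_self_eq_norm_sq] at hkey
  have hyoung := two_mul_inner_le_norm_sq_add_norm_sq (a - q) (p - a)
  rw [← mul_le_mul_iff_of_pos_left hγ]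
  field_simp
  nlinarith [mul_le_mul_of_nonneg_left hyoung hβ]

theorem inertial_prox_grad_gap_bound (hfc : ConvexOn ℝ univ f)
    (hgc : ConvexOn ℝ univ g) (hf' : ∀ z, HasGradientAt f (f' z) z)
    (hlip : ∀ a b, ‖f' a - f' b‖ ≤ L * ‖a - b‖) (hγ : 0 < γ) (hγL : γ * L ≤ 2)
    (hβ0 : 0 ≤ β) (hβ1 : β ≤ 1)
    (hp : IsMinOn (fun z => ‖z - (a - γ • f' a + β • (a - q))‖ ^ 2 / (2 * γ) + g z) univ p)
    (s : E) :
    γ * ((f + g) p - (f + g) s) ≤ (‖a - s‖ ^ 2 - ‖p - s‖ ^ 2) / 2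
      + β / 2 * (‖a - s‖ ^ 2 - ‖q - s‖ ^ 2) + ‖a - q‖ ^ 2 + ‖p - a‖ ^ 2 := by
  have hkey := inertial_prox_grad_mul_sub_le hfc hgc hf' hlip hγ hp s
  have h1 : 2 * ⟪p - a, s - p⟫ = ‖a - s‖ ^ 2 - ‖p - s‖ ^ 2 - ‖p - a‖ ^ 2 := by
    have := norm_sub_sq_real (p - s) (p - a)
    rw [sub_sub_sub_cancel_left] at this
    rw [real_inner_comm, ← neg_sub p s, inner_neg_left]
    linarith
  have h2 : 2 * ⟪a - q, a - s⟫ = ‖a - q‖ ^ 2 + ‖a - s‖ ^ 2 - ‖q - s‖ ^ 2 := by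
    have := norm_sub_sq_real (a - s) (a - q)
    rw [sub_sub_sub_cancel_left, real_inner_comm] at this
    linarith
  have h3 : ⟪a - q, p - s⟫ = ⟪a - q, a - s⟫ + ⟪a - q, p - a⟫ := by
    rw [← inner_add_right, add_comm, sub_add_sub_cancel]
  have hyoung := two_mul_inner_le_norm_sq_add_norm_sq (a - q) (p - a)
  nlinarith [mul_le_mul_of_nonneg_left hyoung hβ0,
    mul_le_mul_of_nonneg_right hγL (sq_nonneg ‖p - a‖),
    mul_le_mul_of_nonneg_right hβ1 (sq_nonneg ‖a - q‖)]

end InertialProxGrad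

theorem pigd_exists_mul_sub_le {f g : E → ℝ} {f' : E → E} {L c : ℝ} (hL : 0 < L) (hc0 : 0 < c)
    (hc1 : c < 1) (hfc : ConvexOn ℝ univ f) (hgc : ConvexOn ℝ univ g)
    (hf' : ∀ z, HasGradientAt f (f' z) z) (hlip : ∀ a b, ‖f' a - f' b‖ ≤ L * ‖a - b‖)
    {β γ : ℕ → ℝ} (hβ : Antitone β) (hβ0 : ∀ k, 0 ≤ β k) (hβ1 : ∀ k, β k < 1)
    (hγ : ∀ k, γ k = 2 * (1 - β k) * c / L) {z : ℕ → E}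
    (hz : ∀ k, IsMinOn (fun w => ‖w - (z (k + 1) - γ k • f' (z (k + 1))
      + β k • (z (k + 1) - z k))‖ ^ 2 / (2 * γ k) + g w) univ (z (k + 2)))
    {xstar : E} (hxstar : ∀ y, (f + g) xstar ≤ (f + g) y)
    (hcoer : Tendsto (f + g) (comap norm atTop) atTop) :
    ∃ C, ∀ k : ℕ, k * ((f + g) (z (k + 1)) - (f + g) xstar) ≤ C := by
  have hγpos : ∀ k, 0 < γ k := fun k => by rw [hγ]; have := hβ1 k; positivity
  set r : ℕ → ℝ := fun k => (f + g) (z (k + 1)) - (f + g) xstar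
  set d : ℕ → ℝ := fun k => ‖z (k + 1) - z k‖ ^ 2
  set δ : ℕ → ℝ := fun k => β k / (2 * γ k)
  set ε : ℝ := L * (1 - c) / (2 * c)
  have hδ_eq : ∀ k, δ k = L / (4 * c) * (β k / (1 - β k)) := fun k => by
    have := (sub_pos.2 (hβ1 k)).ne'; simp only [δ, hγ]; field_simp; ring
  have hδ : Antitone δ := fun i j hij => by
    have hi : 0 < 1 - β i := sub_pos.2 (hβ1 i)
    rw [hδ_eq, hδ_eq]
    gcongr
    · exact hβ0 i
    · exact hβ hij
    · exact hβ hij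
  have hdecr : ∀ k, r (k + 1) + (δ k + ε) * d (k + 1) ≤ r k + δ k * d k := fun k => by
    have h := inertial_prox_grad_sufficient_decrease hfc hgc hf' hlip (hγpos k) (hβ0 k) (hz k)
    have hcoef : (2 - β k) / (2 * γ k) - L / 2 = δ k + ε := by
      have := (sub_pos.2 (hβ1 k)).ne'; simp only [δ, ε, hγ]; field_simp; ring
    simp only [r, d, hcoef] at h ⊢
    linarith
  have hgap : ∀ k, γ 0 * r (k + 1) ≤ (‖z (k + 1) - xstar‖ ^ 2 - ‖z (k + 2) - xstar‖ ^ 2) / 2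
      + β k / 2 * (‖z (k + 1) - xstar‖ ^ 2 - ‖z k - xstar‖ ^ 2) + d k + d (k + 1) := fun k => by
    have hγL : γ k * L ≤ 2 := by
      rw [hγ, div_mul_cancel₀ _ hL.ne']; nlinarith [hβ0 k, hβ1 k]
    have h := inertial_prox_grad_gap_bound hfc hgc hf' hlip (hγpos k) hγL (hβ0 k) (hβ1 k).le
      (hz k) xstar
    have hγ0 : γ 0 ≤ γ k := by
      rw [hγ, hγ]; gcongr; exact hβ (Nat.zero_le k)
    exact (mul_le_mul_of_nonneg_right hγ0 (sub_nonneg.2 (hxstar _))).trans h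
  have hd : ∀ k, 0 ≤ d k := fun k => sq_nonneg _
  have hδ0 : ∀ k, 0 ≤ δ k := fun k => div_nonneg (hβ0 k) (by linarith [hγpos k])
  obtain ⟨R, hR⟩ := exists_norm_le_of_tendsto_comap_norm hcoer
    ((f + g) xstar + lyapunov r δ d 0)
  have hz_bdd : ∀ k, ‖z k‖ ≤ max R ‖z 0‖
    | 0 => le_max_right _ _
    | k + 1 => le_max_of_le_left <| hR _ <| by
        linarith [(le_lyapunov (r := r) hδ0 hd k).trans
          (lyapunov_antitone hδ hd (by positivity) hdecr (Nat.zero_le k))]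
  exact exists_mul_le_of_lyapunov (A := fun k => ‖z k - xstar‖ ^ 2)
    (M := (max R ‖z 0‖ + ‖xstar‖) ^ 2) (hγpos 0) (by positivity) (fun k => sub_nonneg.2 (hxstar _))
    hd hδ hδ0 hβ hβ0 (fun k => sq_nonneg _)
    (fun k => pow_le_pow_left₀ (norm_nonneg _)
      ((norm_sub_le _ _).trans (add_le_add (hz_bdd k) le_rfl)) 2) hdecr hgap

theorem pigd_stmt3_general
    {n : ℕ} (f g F : EuclideanSpace ℝ (Fin n) → ℝ)
    (f' : EuclideanSpace ℝ (Fin n) → EuclideanSpace ℝ (Fin n))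
    (L c : ℝ) (hL : 0 < L) (hc0 : 0 < c) (hc1 : c < 1)
    (hfconv : ConvexOn ℝ Set.univ f)
    (hgconv : ConvexOn ℝ Set.univ g)
    (hf' : ∀ x, HasGradientAt f (f' x) x)
    (hlip : ∀ x y, ‖f' x - f' y‖ ≤ L * ‖x - y‖)
    (hF : ∀ x, F x = f x + g x)
    (β γ : ℕ → ℝ)
    (hβnonneg : ∀ k, 0 ≤ β k)
    (hβmono : ∀ k, β (k + 1) ≤ β k)
    (hγ : ∀ k, γ k = 2 * (1 - β k) * c / L)
    (prox : ℝ → EuclideanSpace ℝ (Fin n) → EuclideanSpace ℝ (Fin n))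
    (hprox : ∀ (γ' : ℝ) (y : EuclideanSpace ℝ (Fin n)), 0 < γ' →
      IsMinOn (fun z => ‖z - y‖ ^ 2 / (2 * γ') + g z) Set.univ (prox γ' y))
    (x : ℤ → EuclideanSpace ℝ (Fin n))
    (hiter : ∀ k : ℕ,
      x (k + 1) = prox (γ k) (x k - γ k • f' (x k) + β k • (x k - x ((k : ℤ) - 1))))
    -- `argmin F` is nonempty and `F xstar = min F`
    (xstar : EuclideanSpace ℝ (Fin n)) (hxstar : ∀ y, F xstar ≤ F y)
    (hβlt : ∀ k, β k < 1)
    -- `F` is coercive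
    (hcoer : Filter.Tendsto F (Filter.comap norm Filter.atTop) Filter.atTop) :
    ∃ C : ℝ, 0 < C ∧ ∀ k : ℕ, 1 ≤ k → F (x k) - F xstar ≤ C / k := by
  obtain rfl : F = f + g := funext hF
  set z : ℕ → EuclideanSpace ℝ (Fin n) := fun k => x ((k : ℤ) - 1)
  have hz_succ : ∀ k : ℕ, z (k + 1) = x k := fun k => by simp [z]
  have hz : ∀ k, IsMinOn (fun w => ‖w - (z (k + 1) - γ k • f' (z (k + 1))
      + β k • (z (k + 1) - z k))‖ ^ 2 / (2 * γ k) + g w) univ (z (k + 2)) := fun k => by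
    have hγk : 0 < γ k := by rw [hγ]; have := hβlt k; positivity
    rw [hz_succ, hz_succ, Nat.cast_succ, hiter]
    exact hprox _ _ hγk
  obtain ⟨C, hC⟩ := pigd_exists_mul_sub_le hL hc0 hc1 hfconv hgconv hf' hlip
    (antitone_nat_of_succ_le hβmono) hβnonneg hβlt hγ hz hxstar hcoer
  refine ⟨max C 1, by positivity, fun k hk => ?_⟩
  rw [le_div_iff₀ (by positivity), mul_comm, ← hz_succ]
  exact (hC k).trans (le_max_left C 1)

/-- Theorem 1, non-ergodic `O(1/k)` rate for PIGD. Under the PIGD setup,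
if `F` is coercive, `argmin F` is nonempty and `0 < inf_k β_k ≤ β_k ≤ β_0 < 1`, then
`F(xᵏ) − min F ≤ C/k` for all `k ≥ 1`. -/
theorem pigd_stmt3
    {n : ℕ} (f g F : EuclideanSpace ℝ (Fin n) → ℝ)
    (f' : EuclideanSpace ℝ (Fin n) → EuclideanSpace ℝ (Fin n))
    (L c : ℝ) (hL : 0 < L) (hc0 : 0 < c) (hc1 : c < 1)
    (hfconv : ConvexOn ℝ Set.univ f)
    (hgconv : ConvexOn ℝ Set.univ g)
    (hgcont : Continuous g)
    (hf' : ∀ x, HasGradientAt f (f' x) x)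
    (hlip : ∀ x y, ‖f' x - f' y‖ ≤ L * ‖x - y‖)
    (hF : ∀ x, F x = f x + g x)
    (hFbdd : BddBelow (Set.range F))
    (β γ : ℕ → ℝ)
    (hβnonneg : ∀ k, 0 ≤ β k)
    (hβmono : ∀ k, β (k + 1) ≤ β k)
    (hγ : ∀ k, γ k = 2 * (1 - β k) * c / L)
    (prox : ℝ → EuclideanSpace ℝ (Fin n) → EuclideanSpace ℝ (Fin n))
    (hprox : ∀ (γ' : ℝ) (y : EuclideanSpace ℝ (Fin n)), 0 < γ' →
      IsMinOn (fun z => ‖z - y‖ ^ 2 / (2 * γ') + g z) Set.univ (prox γ' y))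
    (x : ℤ → EuclideanSpace ℝ (Fin n))
    (hiter : ∀ k : ℕ,
      x (k + 1) = prox (γ k) (x k - γ k • f' (x k) + β k • (x k - x ((k : ℤ) - 1))))
    -- `argmin F` is nonempty and `F xstar = min F`
    (xstar : EuclideanSpace ℝ (Fin n)) (hxstar : ∀ y, F xstar ≤ F y)
    (hβlt : ∀ k, β k < 1)
    -- `0 < inf_k β_k` and `β_k ≤ β_0 < 1`
    (b : ℝ) (hb : 0 < b) (hβlb : ∀ k, b ≤ β k) (hβub : ∀ k, β k ≤ β 0) (hβ0 : β 0 < 1)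
    -- `F` is coercive
    (hcoer : Filter.Tendsto F (Filter.comap norm Filter.atTop) Filter.atTop) :
    ∃ C : ℝ, 0 < C ∧ ∀ k : ℕ, 1 ≤ k → F (x k) - F xstar ≤ C / k :=
  pigd_stmt3_general f g F f' L c hL hc0 hc1 hfconv hgconv hf' hlip hF β γ hβnonneg hβmono hγ prox
    hprox x hiter xstar hxstar hβlt hcoer
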